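/- Let A, B, C, D be n×n integer matrices with B invertible, ADᵀ − BCᵀ = I (the identity matrix), and B⁻¹A symmetric. Let z ∈ ℍⁿ (each z_k in the upper half-plane), set z''_k := (z_k−1)/z_k, let ν ∈ πℤⁿ, λ ∈ ℂ, u := (0,…,0,λ)ᵀ ∈ ℂⁿ, and suppose A·Log z + B·Log z'' = i(ν + u), where Log is applied componentwise. Let μ ∈ ℂ and ν_m ∈ ℤ be such that the last entry of C·Log z + D·Log z'' equals (μ + iπν_m)/2. Define x̃ := 2 · (the last entry of (B⁻¹)ᵀ·(iπ𝟙 − Log z)). Then there exist rational numbers n₁, n₂, depending only on the matrices B, C, D, the vector ν and the integer ν_m (and not on z, λ or μ), such that x̃ = μ + n₁·(iλ) + i·n₂·π. -/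
import Mathlib

open Matrix Real

theorem stmt_7 (n : ℕ) (A B C D : Matrix (Fin (n + 1)) (Fin (n + 1)) ℤ)
    (hB : IsUnit ((B.map (Int.cast : ℤ → ℂ)).det))
    (hsymp : A * Dᵀ - B * Cᵀ = 1)
    (hsym : ((B.map (Int.cast : ℤ → ℂ))⁻¹ * (A.map (Int.cast : ℤ → ℂ))).IsSymm)
    (νZ : Fin (n + 1) → ℤ) (νm : ℤ) :
    ∃ n₁ n₂ : ℚ, ∀ (z : Fin (n + 1) → ℂ) (lam mu : ℂ),
      (∀ k, 0 < (z k).im) →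
      ((A.map (Int.cast : ℤ → ℂ)).mulVec (fun k => Complex.log (z k))
          + (B.map (Int.cast : ℤ → ℂ)).mulVec (fun k => Complex.log ((z k - 1) / z k))
        = fun k => Complex.I * ((π : ℂ) * (νZ k : ℂ)
            + if k = Fin.last n then lam else 0)) →
      (((C.map (Int.cast : ℤ → ℂ)).mulVec (fun k => Complex.log (z k))
          + (D.map (Int.cast : ℤ → ℂ)).mulVec (fun k => Complex.log ((z k - 1) / z k)))
          (Fin.last n)
        = (mu + Complex.I * (π : ℂ) * (νm : ℂ)) / 2) →
      2 * ((((B.map (Int.cast : ℤ → ℂ))⁻¹)ᵀ.mulVec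
            (fun k => Complex.I * (π : ℂ) - Complex.log (z k))) (Fin.last n))
        = mu + (n₁ : ℂ) * (Complex.I * lam) + Complex.I * (n₂ : ℂ) * (π : ℂ) := by
  classical
  set A' := A.map (Int.cast : ℤ → ℂ) with hA'
  set B' := B.map (Int.cast : ℤ → ℂ) with hB'
  set C' := C.map (Int.cast : ℤ → ℂ) with hC'
  set D' := D.map (Int.cast : ℤ → ℂ) with hD'
  set Bq := B.map (Int.cast : ℤ → ℚ) with hBq
  set Dq := D.map (Int.cast : ℤ → ℚ) with hDq
  have hBmap : B' = (Rat.castHom ℂ).mapMatrix Bq := by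
    ext i j; simp [hB', hBq]
  have hDmap : D' = (Rat.castHom ℂ).mapMatrix Dq := by
    ext i j; simp [hD', hDq]
  have hinv : B'⁻¹ = (Rat.castHom ℂ).mapMatrix Bq⁻¹ := by
    rw [Matrix.inv_def, Matrix.inv_def, hBmap, ← RingHom.map_adjugate, ← RingHom.map_det]
    ext i j
    simp [Ring.inverse_eq_inv', map_inv₀, Matrix.smul_apply]
  set Q : Matrix (Fin (n+1)) (Fin (n+1)) ℚ := Dq * Bq⁻¹ with hQdef
  have hQ : D' * B'⁻¹ = (Rat.castHom ℂ).mapMatrix Q := by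
    rw [hDmap, hinv, hQdef, _root_.map_mul]
  set s : ℚ := ∑ k, Bq⁻¹ k (Fin.last n) with hs
  refine ⟨-2 * Q (Fin.last n) (Fin.last n),
    2 * s + νm - 2 * ∑ k, Q (Fin.last n) k * νZ k, ?_⟩
  intro z lam mu _ h1 h2
  set L : Fin (n+1) → ℂ := fun k => Complex.log (z k) with hL
  set L'' : Fin (n+1) → ℂ := fun k => Complex.log ((z k - 1) / z k) with hL2
  set v : Fin (n+1) → ℂ := fun k => Complex.I * ((π : ℂ) * (νZ k : ℂ)
      + if k = Fin.last n then lam else 0) with hv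
  have hBinv : B'⁻¹ * B' = 1 := nonsing_inv_mul _ hB
  have hsymp' : A' * D'ᵀ - B' * C'ᵀ = 1 := by
    have h0 := congrArg ((Int.castRingHom ℂ).mapMatrix) hsymp
    rw [map_sub, _root_.map_mul, _root_.map_mul, _root_.map_one] at h0
    simpa [RingHom.mapMatrix_apply, Matrix.transpose_map, Int.coe_castRingHom,
      hA', hB', hC', hD'] using h0
  have h4 : B'⁻¹ * A' * D'ᵀ - C'ᵀ = B'⁻¹ := by
    have := congrArg (fun M => B'⁻¹ * M) hsymp'
    simpa [mul_sub, mul_one, ← mul_assoc, hBinv, one_mul] using this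
  have hCeq : C' = D' * (B'⁻¹ * A') - (B'⁻¹)ᵀ := by
    have h5 : C'ᵀ = B'⁻¹ * A' * D'ᵀ - B'⁻¹ := by
      rw [← sub_sub_cancel (B'⁻¹ * A' * D'ᵀ) C'ᵀ, h4]
    have h6 := congrArg Matrix.transpose h5
    rw [Matrix.transpose_transpose, Matrix.transpose_sub, Matrix.transpose_mul,
      Matrix.transpose_transpose, hsym.eq] at h6
    rw [h6]
  have hL'' : L'' = B'⁻¹ *ᵥ (v - A' *ᵥ L) := by
    have h7 : B' *ᵥ L'' = v - A' *ᵥ L := eq_sub_of_add_eq' h1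
    rw [← h7, mulVec_mulVec, hBinv, one_mulVec]
  have hvec : C' *ᵥ L + D' *ᵥ L'' = (D' * B'⁻¹) *ᵥ v - (B'⁻¹)ᵀ *ᵥ L := by
    rw [hL'', hCeq, mulVec_mulVec, Matrix.mulVec_sub, Matrix.sub_mulVec,
      mulVec_mulVec, ← mul_assoc]
    abel
  have hBL : ((B'⁻¹)ᵀ *ᵥ L) (Fin.last n)
      = ((D' * B'⁻¹) *ᵥ v) (Fin.last n)
        - (mu + Complex.I * (π : ℂ) * (νm : ℂ)) / 2 := by
    have h8 := congrFun hvec (Fin.last n)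
    simp only [Pi.add_apply, Pi.sub_apply] at h8
    simp only [Pi.add_apply] at h2
    linear_combination h8 - h2
  have hconst : ((B'⁻¹)ᵀ *ᵥ fun _ => Complex.I * (π : ℂ)) (Fin.last n)
      = Complex.I * (π : ℂ) * (s : ℂ) := by
    rw [hinv, hs]
    simp only [mulVec, dotProduct, transpose_apply, RingHom.mapMatrix_apply,
      Matrix.map_apply, Rat.coe_castHom]
    push_cast
    rw [Finset.mul_sum]
    exact Finset.sum_congr rfl fun k _ => by ring
  have hvlast : ((D' * B'⁻¹) *ᵥ v) (Fin.last n)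
      = Complex.I * (π : ℂ) * (∑ k, ((Q (Fin.last n) k : ℂ) * (νZ k : ℂ)))
        + (Q (Fin.last n) (Fin.last n) : ℂ) * (Complex.I * lam) := by
    rw [hQ]
    simp only [mulVec, dotProduct, RingHom.mapMatrix_apply, Matrix.map_apply,
      Rat.coe_castHom, hv]
    have hterm : ∀ k, ((Q (Fin.last n) k : ℂ))
          * (Complex.I * ((π : ℂ) * (νZ k : ℂ) + if k = Fin.last n then lam else 0))
        = Complex.I * (π : ℂ) * ((Q (Fin.last n) k : ℂ) * (νZ k : ℂ))
          + (if k = Fin.last n then (Q (Fin.last n) k : ℂ) * (Complex.I * lam) else 0) := by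
      intro k; split <;> ring
    rw [Finset.sum_congr rfl fun k _ => hterm k, Finset.sum_add_distrib,
      Finset.sum_ite_eq' Finset.univ (Fin.last n)]
    simp [Finset.mul_sum]
  have hsplit : (fun k => Complex.I * (π : ℂ) - Complex.log (z k))
      = (fun _ => Complex.I * (π : ℂ)) - L := rfl
  rw [hsplit, Matrix.mulVec_sub, Pi.sub_apply, hBL, hconst, hvlast]
  push_cast
  ring
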